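/- arXiv:2305.04791 — 2 statements merged into one kernel-verified Lean document; each statement's English description precedes it below -/
import Mathlib

section
/- The index of U(ℤ) inside Γ_pa(q) ∩ U(ℚ) equals q; more precisely, Γ_pa(q) ∩ U(ℚ) consists exactly of elements n(x)·s([[a,b],[b,c]]) with x, b, c ∈ ℤ and a ∈ q⁻¹ℤ. -/
open Matrix

abbrev M4 := Matrix (Fin 4) (Fin 4) ℚ

def Jmat : M4 := !![0,0,1,0; 0,0,0,1; -1,0,0,0; 0,-1,0,0]

/-- `Sp₄(ℚ)`: rational matrices with `gᵀ J g = J`. -/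
def Sp4Q : Set M4 := {g | gᵀ * Jmat * g = Jmat}

/-- The integrality scale of the paramodular pattern: the `(i,j)` entry of a
paramodular matrix lies in `paraScale q i j • ℤ`.  (0-based indices: the
`(1,3)`-entry of the paper is `(0,2)` here, etc.) -/
def paraScale (q : ℕ) (i j : Fin 4) : ℚ :=
  if i = 0 ∧ j = 2 then (q : ℚ)⁻¹
  else if (i = 1 ∧ j = 0) ∨ (i = 2 ∧ j = 0) ∨ (i = 2 ∧ j = 1) ∨ (i = 2 ∧ j = 3) ∨
      (i = 3 ∧ j = 0) then (q : ℚ)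
  else 1

/-- The paramodular group `Γ_pa(q)` of level `q`. -/
def Para (q : ℕ) : Set M4 :=
  {g | g ∈ Sp4Q ∧ ∀ i j, ∃ n : ℤ, g i j = paraScale q i j * n}


def nMat (x : ℚ) : M4 := !![1,x,0,0; 0,1,0,0; 0,0,1,0; 0,0,-x,1]

def sMat (a b c : ℚ) : M4 := !![1,0,a,b; 0,1,b,c; 0,0,1,0; 0,0,0,1]

/-- A general element `n(x)·s(T)` of the unipotent radical `U`. -/
def uMat (x a b c : ℚ) : M4 := nMat x * sMat a b c

/-- `U(ℚ)`, the unipotent radical of the Borel of `Sp₄` over `ℚ`. -/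
def UQ : Set M4 := {g | ∃ x a b c : ℚ, g = uMat x a b c}

/-- `U(ℤ)`, the integral points of the unipotent radical. -/
def UZ : Set M4 := {g | ∃ x a b c : ℤ, g = uMat x a b c}

/-!
Multiplying out, `n(x)s(a,b,c)` has first row `(1, x, a + xb, b + xc)` and second row
`(0, 1, b, c)`, so the paramodular integrality conditions on `U(ℚ)` say exactly that
`x, b, c ∈ ℤ` and `a + xb ∈ q⁻¹ℤ`. Left multiplication by `U(ℤ)` moves `q(a + xb)` only
by multiples of `q`, and any two elements with the same residue of `q(a + xb)` mod `q`
differ by an element of `U(ℤ)`; hence this residue identifies the cosets with `ℤ/qℤ`.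
-/

lemma uMat_eq (x a b c : ℚ) :
    uMat x a b c = !![1, x, a + x * b, b + x * c; 0, 1, b, c; 0, 0, 1, 0; 0, 0, -x, 1] := by
  ext i j
  fin_cases i <;> fin_cases j <;>
    simp [uMat, nMat, sMat, Matrix.mul_apply, Fin.sum_univ_four]

lemma uMat_mul (x a b c x' a' b' c' : ℚ) :
    uMat x a b c * uMat x' a' b' c' =
      uMat (x + x') (a + a' - 2 * x' * b + x' ^ 2 * c) (b + b' - x' * c) (c + c') := by
  rw [uMat_eq, uMat_eq, uMat_eq]
  ext i j
  fin_cases i <;> fin_cases j <;> simp [Matrix.mul_apply, Fin.sum_univ_four] <;> ring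

lemma uMat_mem_Sp4Q (x a b c : ℚ) : uMat x a b c ∈ Sp4Q := by
  change _ = _
  rw [uMat_eq]
  ext i j
  fin_cases i <;> fin_cases j <;> simp [Jmat, Matrix.mul_apply, Fin.sum_univ_four] <;> ring

lemma uMat_inj {x a b c x' a' b' c' : ℚ} :
    uMat x a b c = uMat x' a' b' c' ↔ x = x' ∧ a = a' ∧ b = b' ∧ c = c' := by
  refine ⟨fun h => ?_, by rintro ⟨rfl, rfl, rfl, rfl⟩; rfl⟩
  rw [uMat_eq, uMat_eq] at h
  have hx : x = x' := by simpa using congrFun₂ h 0 1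
  have hb : b = b' := by simpa using congrFun₂ h 1 2
  have hc : c = c' := by simpa using congrFun₂ h 1 3
  have ha : a + x * b = a' + x' * b' := by simpa using congrFun₂ h 0 2
  subst hx hb hc
  exact ⟨rfl, add_right_cancel ha, rfl, rfl⟩

lemma mem_Para_inter_UQ_iff {q : ℕ} (hq : 0 < q) (g : M4) :
    g ∈ Para q ∧ g ∈ UQ ↔ ∃ x b c m : ℤ, g = uMat x (m / q) b c := by
  have hq0 : (q : ℚ) ≠ 0 := Nat.cast_ne_zero.mpr hq.ne'
  constructor
  · rintro ⟨⟨-, hint⟩, x, a, b, c, rfl⟩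
    obtain ⟨nx, hx⟩ := hint 0 1
    obtain ⟨nb, hb⟩ := hint 1 2
    obtain ⟨nc, hc⟩ := hint 1 3
    obtain ⟨na, ha⟩ := hint 0 2
    simp [uMat_eq, paraScale] at hx hb hc ha
    subst hx hb hc
    refine ⟨nx, nb, nc, na - q * nx * nb, uMat_inj.2 ⟨rfl, ?_, rfl, rfl⟩⟩
    rw [eq_div_iff hq0]
    push_cast
    field_simp at ha
    linear_combination ha
  · rintro ⟨x, b, c, m, rfl⟩
    refine ⟨⟨uMat_mem_Sp4Q _ _ _ _, fun i j => ?_⟩, _, _, _, _, rfl⟩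
    refine ⟨!![1, x, m + q * x * b, b + x * c; 0, 1, b, c; 0, 0, 1, 0; 0, 0, -x, 1] i j, ?_⟩
    fin_cases i <;> fin_cases j <;> simp [uMat_eq, paraScale]
    field_simp

lemma Nat.card_quot_eq_of_surjective {α β : Type*} {r : α → α → Prop} (f : α → β)
    (hf : Function.Surjective f) (hr : ∀ a b, r a b ↔ f a = f b) :
    Nat.card (Quot r) = Nat.card β := by
  have hker : r = (Setoid.ker f).r := by
    ext a b
    exact hr a b
  subst hker
  exact Nat.card_congr (Setoid.quotientKerEquivOfSurjective f hf)

/-- For `g ∈ Γ_pa(q)` the number `q · g₀₂` is an integer; its residue mod `q` is the coset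
invariant. -/
def paraResidue (q : ℕ) (g : M4) : ZMod q := ((q * g 0 2 : ℚ).num : ZMod q)

lemma paraResidue_uMat {q : ℕ} (hq : 0 < q) (x b c m : ℤ) :
    paraResidue q (uMat x (m / q) b c) = m := by
  have hq0 : (q : ℚ) ≠ 0 := Nat.cast_ne_zero.mpr hq.ne'
  have hint : (q * uMat x (m / q) b c 0 2 : ℚ) = ((m + q * x * b : ℤ) : ℚ) := by
    simp [uMat_eq]
    field_simp
  rw [paraResidue, hint, Rat.num_intCast]
  simp

lemma exists_UZ_mul_uMat_iff {q : ℕ} (hq : 0 < q) (xg bg cg mg xh bh ch mh : ℤ) :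
    (∃ u ∈ UZ, uMat xg (mg / q) bg cg = u * uMat xh (mh / q) bh ch) ↔
      (mg : ZMod q) = mh := by
  have hq0 : (q : ℚ) ≠ 0 := Nat.cast_ne_zero.mpr hq.ne'
  rw [eq_comm, ZMod.intCast_eq_intCast_iff_dvd_sub]
  constructor
  · rintro ⟨_, ⟨X, A, B, C, rfl⟩, h⟩
    rw [uMat_mul, uMat_inj] at h
    refine ⟨A - 2 * xh * B + xh ^ 2 * C, ?_⟩
    have ha := h.2.1
    field_simp at ha
    have hdiff : ((mg - mh : ℤ) : ℚ) = (q * (A - 2 * xh * B + xh ^ 2 * C) : ℤ) := by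
      push_cast
      linear_combination ha
    exact_mod_cast hdiff
  · rintro ⟨t, ht⟩
    -- the witness is `g h⁻¹`, solved for from `uMat_mul`
    refine ⟨uMat (xg - xh : ℤ)
        (t + 2 * xh * (bg - bh + xh * (cg - ch)) - xh ^ 2 * (cg - ch) : ℤ)
        (bg - bh + xh * (cg - ch) : ℤ) (cg - ch : ℤ), ⟨_, _, _, _, rfl⟩, ?_⟩
    have hmg : (mg : ℚ) = mh + q * t := by
      exact_mod_cast (by linear_combination ht : mg = mh + q * t)
    rw [uMat_mul, uMat_inj, hmg]
    push_cast
    refine ⟨by ring, ?_, by ring, by ring⟩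
    field_simp
    ring

/-- `Γ_pa(q) ∩ U(ℚ)` consists exactly of the elements `n(x)·s([[a,b],[b,c]])`
with `x, b, c ∈ ℤ` and `a ∈ q⁻¹ℤ`; moreover the index `[Γ_pa(q) ∩ U(ℚ) : U(ℤ)]`
equals `q` (the set of left cosets of `U(ℤ)` in `Γ_pa(q) ∩ U(ℚ)` has `q`
elements). -/
theorem stmt_3 (q : ℕ) (hq : 0 < q) :
    (∀ g : M4, (g ∈ Para q ∧ g ∈ UQ) ↔
      ∃ (x b c : ℤ) (a : ℚ), (∃ m : ℤ, a = (m : ℚ) / q) ∧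
        g = nMat x * sMat a b c) ∧
    Nat.card (Quot (fun (g h : {g : M4 // g ∈ Para q ∧ g ∈ UQ}) =>
      ∃ u ∈ UZ, (g : M4) = u * (h : M4))) = q := by
  refine ⟨fun g => ?_, ?_⟩
  · rw [mem_Para_inter_UQ_iff hq]
    constructor
    · rintro ⟨x, b, c, m, rfl⟩
      exact ⟨x, b, c, _, ⟨m, rfl⟩, rfl⟩
    · rintro ⟨x, b, c, _, ⟨m, rfl⟩, rfl⟩
      exact ⟨x, b, c, m, rfl⟩
  refine (Nat.card_quot_eq_of_surjective (fun g => paraResidue q g.1) (fun k => ?_)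
    (fun g h => ?_)).trans (Nat.card_zmod q)
  · obtain ⟨m, rfl⟩ := ZMod.intCast_surjective k
    have hmem := (mem_Para_inter_UQ_iff hq _).2 ⟨0, 0, 0, m, rfl⟩
    exact ⟨⟨_, hmem⟩, paraResidue_uMat hq 0 0 0 m⟩
  · obtain ⟨xg, bg, cg, mg, hg⟩ := (mem_Para_inter_UQ_iff hq _).1 g.2
    obtain ⟨xh, bh, ch, mh, hh⟩ := (mem_Para_inter_UQ_iff hq _).1 h.2
    simp only [hg, hh, paraResidue_uMat hq]
    exact exists_UZ_mul_uMat_iff hq xg bg cg mg xh bh ch mh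
end

section
/- Let q be prime. The Kloosterman sum for the paramodular group Γ_pa(q) attached to the Weyl element w = s₁s₂s₁ and modulus c = (q,q) with trivial characters equals q²: the Kloosterman set X_{Γ_pa(q)}((q,q)*w) = U(ℤ)\[U(ℚ)w c* U_w(ℚ) ∩ Γ_pa(q)]/U_w(ℤ) has exactly q² elements, all of which are annihilated trivially by the characters (the free parameters x₂ mod qℤ and y₂ mod q are not seen by the characters). -/
open Matrix

/-- An element of `U_w(ℚ)` for `w = s₁s₂s₁`: `n(x)·s([[a,b],[b,0]])`. -/
def uwMat (x a b : ℚ) : M4 := nMat x * sMat a b 0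

/-- `U_w(ℤ)` for `w = s₁s₂s₁`. -/
def UwZ : Set M4 := {g | ∃ x a b : ℤ, g = uwMat x a b}

/-- The product `w·c*` for `w = s₁s₂s₁`, `c = (q,q)`. -/
def wcMat (q : ℕ) : M4 :=
  !![0, 0, -(q : ℚ)⁻¹, 0; 0, -1, 0, 0; (q : ℚ), 0, 0, 0; 0, 0, 0, -1]

/-- The Bruhat cell `U(ℚ)·w·c*·U_w(ℚ) ∩ Γ_pa(q)` for `w = s₁s₂s₁`, `c = (q,q)`. -/
def cell (q : ℕ) : Set M4 :=
  {g | (∃ x a b c x' a' b' : ℚ, g = uMat x a b c * wcMat q * uwMat x' a' b') ∧ g ∈ Para q}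

lemma uwMat_eq (x a b : ℚ) : uwMat x a b = uMat x a b 0 := rfl

lemma uMat_mul_uMat_zero (x a b c A : ℚ) : uMat x a b c * uMat 0 A 0 0 = uMat x (a + A) b c := by
  simp only [uMat_eq]
  ext i j
  fin_cases i <;> fin_cases j <;> (simp [mul_apply, Fin.sum_univ_four]; try ring)

lemma uwMat_zero_mul_uwMat (x a b A : ℚ) : uwMat 0 A 0 * uwMat x a b = uwMat x (A + a) b := by
  simp only [uwMat_eq, uMat_eq]
  ext i j
  fin_cases i <;> fin_cases j <;> (simp [mul_apply, Fin.sum_univ_four]; try ring)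

lemma uMat_mul_wcMat_mul_uwMat (q : ℕ) (x a b c x' a' b' : ℚ) :
    uMat x a b c * wcMat q * uwMat x' a' b' =
    !![q * (a + x * b), q * (a + x * b) * x' - x,
         q * (a + x * b) * (a' + x' * b') - x * b' - (q : ℚ)⁻¹ + (b + x * c) * x',
         q * (a + x * b) * b' - (b + x * c);
       q * b, q * b * x' - 1, q * b * (a' + x' * b') - b' + c * x', q * b * b' - c;
       q, q * x', q * (a' + x' * b'), q * b';
       -(q * x), -(q * x * x'), -(q * x) * (a' + x' * b') + x', -(q * x * b') - 1] := by
  simp only [uwMat_eq, uMat_eq]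
  ext i j
  fin_cases i <;> fin_cases j <;>
    (simp [wcMat, mul_apply, Fin.sum_univ_four, -mul_eq_mul_right_iff]; try ring)

lemma uMat_mul_mul_uwMat_apply_zero_zero (h : M4) (x a b c x' a' b' : ℚ) :
    (uMat x a b c * h * uwMat x' a' b') 0 0 =
      h 0 0 + x * h 1 0 + (a + x * b) * h 2 0 + (b + x * c) * h 3 0 := by
  simp [uwMat_eq, uMat_eq, mul_apply, Fin.sum_univ_four, vecMul, dotProduct]

lemma uMat_mul_mul_uwMat_apply_two_two (h : M4) (x a b c x' a' b' : ℚ) :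
    (uMat x a b c * h * uwMat x' a' b') 2 2 =
      h 2 0 * (a' + x' * b') + h 2 1 * b' + h 2 2 - h 2 3 * x' := by
  simp [uwMat_eq, uMat_eq, mul_apply, Fin.sum_univ_four, vecMul, dotProduct]
  ring

def repMat (q : ℕ) (S T : ℚ) : M4 := uMat 0 (S / q) 0 0 * wcMat q * uwMat 0 (T / q) 0

lemma repMat_eq {q : ℕ} (hq : (q : ℚ) ≠ 0) (S T : ℚ) :
    repMat q S T = !![S, 0, (S * T - 1) / q, 0; 0, -1, 0, 0; q, 0, T, 0; 0, 0, 0, -1] := by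
  rw [repMat, uMat_mul_wcMat_mul_uwMat]
  ext i j
  fin_cases i <;> fin_cases j <;> (simp; try field_simp)

lemma repMat_mem_Sp4Q {q : ℕ} (hq : (q : ℚ) ≠ 0) (S T : ℚ) : repMat q S T ∈ Sp4Q := by
  change _ = _
  rw [repMat_eq hq]
  ext i j
  fin_cases i <;> fin_cases j <;>
    (simp [Jmat, mul_apply, Fin.sum_univ_four]; try field_simp) <;> ring

lemma repMat_mem_Para {q : ℕ} (hq : (q : ℚ) ≠ 0) (S T : ℤ) : repMat q S T ∈ Para q := by
  refine ⟨repMat_mem_Sp4Q hq S T, fun i j =>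
    ⟨(!![S, 0, S * T - 1, 0; 0, -1, 0, 0; 1, 0, T, 0; 0, 0, 0, -1] : Matrix (Fin 4) (Fin 4) ℤ) i j,
      ?_⟩⟩
  rw [repMat_eq hq]
  fin_cases i <;> fin_cases j <;> simp [paraScale, div_eq_inv_mul]

lemma exists_eq_intCast_of_mem_Para {q : ℕ} {g : M4} (hg : g ∈ Para q) {i j : Fin 4}
    (hij : paraScale q i j = 1) : ∃ n : ℤ, g i j = n := by
  simpa only [hij, one_mul] using hg.2 i j

lemma exists_eq_mul_intCast_of_mem_Para {q : ℕ} {g : M4} (hg : g ∈ Para q) {i j : Fin 4}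
    (hij : paraScale q i j = q) : ∃ n : ℤ, g i j = q * n := by
  simpa only [hij] using hg.2 i j

lemma exists_int_params_of_mem_Para {q : ℕ} (hq : (q : ℚ) ≠ 0) {x a b c x' a' b' : ℚ}
    (h : uMat x a b c * wcMat q * uwMat x' a' b' ∈ Para q) :
    ∃ X B C X' B' N N' : ℤ, x = X ∧ b = B ∧ c = C ∧ x' = X' ∧ b' = B' ∧
      q * (a + x * b) = N ∧ q * (a' + x' * b') = N' := by
  rw [uMat_mul_wcMat_mul_uwMat] at h
  obtain ⟨N, hN : q * (a + x * b) = N⟩ := exists_eq_intCast_of_mem_Para h (i := 0) (j := 0) rfl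
  obtain ⟨B, hB : q * b = q * B⟩ := exists_eq_mul_intCast_of_mem_Para h (i := 1) (j := 0) rfl
  obtain ⟨C', hC' : q * b * b' - c = C'⟩ := exists_eq_intCast_of_mem_Para h (i := 1) (j := 3) rfl
  obtain ⟨X', hX' : q * x' = q * X'⟩ := exists_eq_mul_intCast_of_mem_Para h (i := 2) (j := 1) rfl
  obtain ⟨N', hN' : q * (a' + x' * b') = N'⟩ :=
    exists_eq_intCast_of_mem_Para h (i := 2) (j := 2) rfl
  obtain ⟨B', hB' : q * b' = q * B'⟩ := exists_eq_mul_intCast_of_mem_Para h (i := 2) (j := 3) rfl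
  obtain ⟨X, hX : -(q * x) = q * X⟩ := exists_eq_mul_intCast_of_mem_Para h (i := 3) (j := 0) rfl
  have hb : b = B := mul_left_cancel₀ hq hB
  have hb' : b' = B' := mul_left_cancel₀ hq hB'
  have hc : c = ((B * B' * q - C' : ℤ) : ℚ) := by
    push_cast
    rw [← hb, ← hb', ← hC']
    ring
  have hx : x = ((-X : ℤ) : ℚ) := mul_left_cancel₀ hq (by push_cast; linarith)
  exact ⟨-X, B, _, X', B', N, N', hx, hb, hc, mul_left_cancel₀ hq hX', hb', hN, hN'⟩

lemma uMat_mul_wcMat_mul_uwMat_eq_repMat (q : ℕ) (x a b c x' a' b' S T : ℚ) :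
    uMat x a b c * wcMat q * uwMat x' a' b' =
      uMat x (a - S / q) b c * repMat q S T * uwMat x' (a' - T / q) b' := by
  conv_lhs => rw [← sub_add_cancel a (S / q), ← add_sub_cancel (T / q) a', ← uMat_mul_uMat_zero,
    ← uwMat_zero_mul_uwMat]
  simp only [repMat, Matrix.mul_assoc]

lemma UZ_mul_mul_UwZ_apply_zero_zero {q : ℕ} {u h v : M4} (hu : u ∈ UZ) (hv : v ∈ UwZ)
    (hh : h ∈ Para q) : ∃ k : ℤ, (u * h * v) 0 0 = h 0 0 + q * k := by
  obtain ⟨x, a, b, c, rfl⟩ := hu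
  obtain ⟨x', a', b', rfl⟩ := hv
  obtain ⟨n₁, h₁⟩ := exists_eq_mul_intCast_of_mem_Para hh (i := 1) (j := 0) rfl
  obtain ⟨n₂, h₂⟩ := exists_eq_mul_intCast_of_mem_Para hh (i := 2) (j := 0) rfl
  obtain ⟨n₃, h₃⟩ := exists_eq_mul_intCast_of_mem_Para hh (i := 3) (j := 0) rfl
  refine ⟨x * n₁ + (a + x * b) * n₂ + (b + x * c) * n₃, ?_⟩
  rw [uMat_mul_mul_uwMat_apply_zero_zero, h₁, h₂, h₃]
  push_cast
  ring

lemma UZ_mul_mul_UwZ_apply_two_two {q : ℕ} {u h v : M4} (hu : u ∈ UZ) (hv : v ∈ UwZ)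
    (hh : h ∈ Para q) : ∃ k : ℤ, (u * h * v) 2 2 = h 2 2 + q * k := by
  obtain ⟨x, a, b, c, rfl⟩ := hu
  obtain ⟨x', a', b', rfl⟩ := hv
  obtain ⟨n₀, h₀⟩ := exists_eq_mul_intCast_of_mem_Para hh (i := 2) (j := 0) rfl
  obtain ⟨n₁, h₁⟩ := exists_eq_mul_intCast_of_mem_Para hh (i := 2) (j := 1) rfl
  obtain ⟨n₃, h₃⟩ := exists_eq_mul_intCast_of_mem_Para hh (i := 2) (j := 3) rfl
  refine ⟨n₀ * (a' + x' * b') + n₁ * b' - n₃ * x', ?_⟩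
  rw [uMat_mul_mul_uwMat_apply_two_two, h₀, h₁, h₃]
  push_cast
  ring

lemma intCast_div_sub_val_div (q : ℕ) [NeZero q] (N : ℤ) :
    (N : ℚ) / q - ((N : ZMod q).val : ℚ) / q = ((N / q : ℤ) : ℚ) := by
  have hq : (q : ℚ) ≠ 0 := NeZero.ne _
  have hval : (((N : ZMod q).val : ℤ) : ℚ) = ((N % q : ℤ) : ℚ) := congrArg _ (ZMod.val_intCast N)
  push_cast at hval
  rw [← sub_div, hval, div_eq_iff hq]
  have hdiv : (((N / q : ℤ) * q + N % q : ℤ) : ℚ) = N := congrArg _ (Int.ediv_mul_add_emod N q)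
  push_cast at hdiv
  linarith

section DoubleCosets

variable {q : ℕ}

def cellRel (q : ℕ) (g h : {g : M4 // g ∈ cell q}) : Prop :=
  ∃ u ∈ UZ, ∃ v ∈ UwZ, (g : M4) = u * (h : M4) * v

/-- The entries `g₁₁, g₃₃` are integers, so `num` returns them; their residues mod `q` classify
the double cosets. -/
def cellInvariant (g : {g : M4 // g ∈ cell q}) : ZMod q × ZMod q :=
  (((g : M4) 0 0).num, ((g : M4) 2 2).num)

lemma cellInvariant_eq_of_cellRel {g h : {g : M4 // g ∈ cell q}} (hgh : cellRel q g h) :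
    cellInvariant g = cellInvariant h := by
  obtain ⟨u, hu, v, hv, hg⟩ := hgh
  obtain ⟨k, hk⟩ := UZ_mul_mul_UwZ_apply_zero_zero hu hv h.2.2
  obtain ⟨k', hk'⟩ := UZ_mul_mul_UwZ_apply_two_two hu hv h.2.2
  obtain ⟨n, hn⟩ := exists_eq_intCast_of_mem_Para h.2.2 (i := 0) (j := 0) rfl
  obtain ⟨n', hn'⟩ := exists_eq_intCast_of_mem_Para h.2.2 (i := 2) (j := 2) rfl
  have hg₀ : (g : M4) 0 0 = ((n + q * k : ℤ) : ℚ) := by rw [hg, hk, hn]; push_cast; rfl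
  have hg₂ : (g : M4) 2 2 = ((n' + q * k' : ℤ) : ℚ) := by rw [hg, hk', hn']; push_cast; rfl
  rw [cellInvariant, cellInvariant, hg₀, hg₂, hn, hn']
  simp only [Rat.num_intCast]
  simp

variable [NeZero q]

lemma repMat_val_mem_cell (p : ZMod q × ZMod q) :
    repMat q p.1.val p.2.val ∈ cell q :=
  ⟨⟨0, _, 0, 0, 0, _, 0, rfl⟩, by exact_mod_cast repMat_mem_Para (NeZero.ne _) p.1.val p.2.val⟩

def cellRep (p : ZMod q × ZMod q) : {g : M4 // g ∈ cell q} :=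
  ⟨repMat q p.1.val p.2.val, repMat_val_mem_cell p⟩

lemma cellInvariant_cellRep (p : ZMod q × ZMod q) : cellInvariant (cellRep p) = p := by
  simp [cellInvariant, cellRep, repMat_eq (NeZero.ne _), -ZMod.natCast_val, ZMod.natCast_zmod_val]

lemma cellRel_cellRep_cellInvariant (g : {g : M4 // g ∈ cell q}) :
    cellRel q g (cellRep (cellInvariant g)) := by
  obtain ⟨⟨x, a, b, c, x', a', b', hg⟩, hpara⟩ := g.2
  obtain ⟨X, B, C, X', B', N, N', rfl, rfl, rfl, rfl, rfl, hN, hN'⟩ :=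
    exists_int_params_of_mem_Para (NeZero.ne _) (hg ▸ hpara)
  have hinv : cellInvariant g = ((N : ZMod q), (N' : ZMod q)) := by
    simp [cellInvariant, hg, uMat_mul_wcMat_mul_uwMat, hN, hN']
  have hq : (q : ℚ) ≠ 0 := NeZero.ne _
  have ha : a - ((N : ZMod q).val : ℚ) / q = ((N / q - X * B : ℤ) : ℚ) := by
    rw [Int.cast_sub, ← intCast_div_sub_val_div, ← hN]
    field_simp
    push_cast
    ring
  have ha' : a' - ((N' : ZMod q).val : ℚ) / q = ((N' / q - X' * B' : ℤ) : ℚ) := by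
    rw [Int.cast_sub, ← intCast_div_sub_val_div, ← hN']
    field_simp
    push_cast
    ring
  refine ⟨_, ⟨X, N / q - X * B, B, C, rfl⟩, _, ⟨X', N' / q - X' * B', B', rfl⟩, ?_⟩
  rw [hg, hinv, uMat_mul_wcMat_mul_uwMat_eq_repMat q _ _ _ _ _ _ _ ((N : ZMod q).val)
    ((N' : ZMod q).val), ha, ha']
  rfl

def cellQuotEquiv : Quot (cellRel q) ≃ ZMod q × ZMod q where
  toFun := Quot.lift cellInvariant fun _ _ => cellInvariant_eq_of_cellRel
  invFun p := Quot.mk _ (cellRep p)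
  left_inv := Quot.ind fun g => (Quot.sound (cellRel_cellRep_cellInvariant g)).symm
  right_inv := cellInvariant_cellRep

end DoubleCosets

lemma exp_two_pi_I_mul_ratCast_eq_one {r : ℚ} {n : ℤ} (h : r = n) :
    Complex.exp (2 * Real.pi * Complex.I * (r : ℂ)) = 1 := by
  rw [h, Rat.cast_intCast, mul_comm]
  exact Complex.exp_int_mul_two_pi_mul_I n

open Complex in
/-- For prime `q`, the Kloosterman set
`X_{Γ_pa(q)}((q,q)*s₁s₂s₁) = U(ℤ)\[U(ℚ)·w·c*·U_w(ℚ) ∩ Γ_pa(q)]/U_w(ℤ)`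
has exactly `q²` elements, and the characters `ψ^{(M)}, ψ^{(N)}` are trivial on
every decomposition (so `Kl_{Γ_pa(q),s₁s₂s₁}((q,q);1,N) = q²`). -/
theorem stmt_7 (q : ℕ) (hq : q.Prime) :
    Nat.card (Quot (fun (g h : {g : M4 // g ∈ cell q}) =>
      ∃ u ∈ UZ, ∃ v ∈ UwZ, (g : M4) = u * (h : M4) * v)) = q ^ 2 ∧
    (∀ x a b c x' a' b' : ℚ,
      uMat x a b c * wcMat q * uwMat x' a' b' ∈ Para q →
        Complex.exp (2 * Real.pi * Complex.I * ((x + c : ℚ) : ℂ)) = 1 ∧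
        Complex.exp (2 * Real.pi * Complex.I * ((x' : ℚ) : ℂ)) = 1) := by
  have : NeZero q := ⟨hq.ne_zero⟩
  refine ⟨?_, fun x a b c x' a' b' h => ?_⟩
  · change Nat.card (Quot (cellRel q)) = q ^ 2
    rw [Nat.card_congr (cellQuotEquiv (q := q)), Nat.card_prod, Nat.card_zmod, sq]
  · obtain ⟨X, -, C, X', -, -, -, hx, -, hc, hx', -⟩ :=
      exists_int_params_of_mem_Para (NeZero.ne _) h
    exact ⟨exp_two_pi_I_mul_ratCast_eq_one (n := X + C) (by push_cast [hx, hc]; rfl),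
      exp_two_pi_I_mul_ratCast_eq_one hx'⟩
end
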